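/- arXiv:1611.09219 — 3 statements merged into one kernel-verified Lean document; each statement's English description precedes it below -/
import Mathlib

section
/- Let c_max > 0, let F : ℝ → ℝ be continuous and nondecreasing on [0, c_max], concave on [0, c_max], with F(0) = 0 and F(c_max) = 1, and let B, V₁, V₂ > 0 be constants with B·(V₁ + V₂) ≤ c_max. Then there exists a unique c* ∈ (0, c_max] satisfying the equilibrium equation B·(V₁·F(c*) + V₂) = c*. -/
/-!
Writing `ψ c = B (V₁ F c + V₂) - c`, the equilibrium thresholds are the zeros of `ψ` in `(0, c_max]`.
`ψ` is continuous and concave, `ψ 0 = B V₂ > 0` and `ψ c_max ≤ 0`, so the intermediate value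
theorem gives a zero. A concave function that is positive at `0` cannot vanish at two points
`0 < a < b`: `a` lies strictly between `0` and `b`, so concavity would force `ψ b < ψ a = 0`.
-/

open Set

theorem ConcaveOn.apply_neg_of_apply_eq_zero {s : Set ℝ} {ψ : ℝ → ℝ} (hψ : ConcaveOn ℝ s ψ)
    (h0 : (0 : ℝ) ∈ s) (hψ0 : 0 < ψ 0) {x y : ℝ} (hy : y ∈ s) (hx0 : 0 < x) (hxy : x < y)
    (hψx : ψ x = 0) : ψ y < 0 := by
  have hx : x ∈ openSegment ℝ 0 y := by
    rw [openSegment_eq_Ioo (hx0.trans hxy)]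
    exact ⟨hx0, hxy⟩
  simpa only [hψx] using hψ.lt_right_of_left_lt h0 hy hx (hψx ▸ hψ0)

theorem ConcaveOn.eq_of_apply_eq_zero {s : Set ℝ} {ψ : ℝ → ℝ} (hψ : ConcaveOn ℝ s ψ)
    (h0 : (0 : ℝ) ∈ s) (hψ0 : 0 < ψ 0) {a b : ℝ} (ha : a ∈ s) (hb : b ∈ s)
    (ha0 : 0 < a) (hb0 : 0 < b) (hψa : ψ a = 0) (hψb : ψ b = 0) : a = b := by
  rcases lt_trichotomy a b with hab | hab | hab
  · exact absurd hψb (hψ.apply_neg_of_apply_eq_zero h0 hψ0 hb ha0 hab hψa).ne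
  · exact hab
  · exact absurd hψa (hψ.apply_neg_of_apply_eq_zero h0 hψ0 ha hb0 hab hψb).ne

theorem existsUnique_mem_Ioc_eq_zero_of_concaveOn {r : ℝ} {ψ : ℝ → ℝ} (hr : 0 ≤ r)
    (hcont : ContinuousOn ψ (Icc 0 r)) (hconc : ConcaveOn ℝ (Icc 0 r) ψ)
    (hψ0 : 0 < ψ 0) (hψr : ψ r ≤ 0) : ∃! c, c ∈ Ioc 0 r ∧ ψ c = 0 := by
  obtain ⟨c, hc, hψc⟩ := intermediate_value_Icc' hr hcont ⟨hψr, hψ0.le⟩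
  have hc0 : 0 < c := hc.1.lt_of_ne (by rintro rfl; exact hψ0.ne' hψc)
  refine ⟨c, ⟨⟨hc0, hc.2⟩, hψc⟩, fun d ⟨hd, hψd⟩ => ?_⟩
  exact hconc.eq_of_apply_eq_zero (left_mem_Icc.2 hr) hψ0 (Ioc_subset_Icc_self hd) hc hd.1 hc0
    hψd hψc

theorem stmt0_general (cmax B V₁ V₂ : ℝ) (F : ℝ → ℝ)
    (hcmax : 0 < cmax)
    (hFcont : ContinuousOn F (Set.Icc 0 cmax))
    (hFconc : ConcaveOn ℝ (Set.Icc 0 cmax) F)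
    (hF0 : F 0 = 0) (hF1 : F cmax = 1)
    (hB : 0 < B) (hV₁ : 0 < V₁) (hV₂ : 0 < V₂)
    (hle : B * (V₁ + V₂) ≤ cmax) :
    ∃! c : ℝ, c ∈ Set.Ioc 0 cmax ∧ B * (V₁ * F c + V₂) = c := by
  set ψ : ℝ → ℝ := fun c => B * (V₁ * F c + V₂) - c
  have hcont : ContinuousOn ψ (Icc 0 cmax) := by fun_prop
  have hconc : ConcaveOn ℝ (Icc 0 cmax) ψ :=
    (((hFconc.smul hV₁.le).add_const V₂).smul hB.le).sub (convexOn_id (convex_Icc 0 cmax))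
  have hψ0 : 0 < ψ 0 := by simp only [ψ, hF0]; nlinarith
  have hψcmax : ψ cmax ≤ 0 := by simp only [ψ, hF1]; linarith
  simpa only [ψ, sub_eq_zero] using
    existsUnique_mem_Ioc_eq_zero_of_concaveOn hcmax.le hcont hconc hψ0 hψcmax

/-- Theorem 1 (analytic core): existence and uniqueness of the non-degenerate
effort-exertion threshold `c*` solving the equilibrium equation
`B * (V₁ * F c* + V₂) = c*`. -/
theorem stmt0 (cmax B V₁ V₂ : ℝ) (F : ℝ → ℝ)
    (hcmax : 0 < cmax)
    (hFcont : ContinuousOn F (Set.Icc 0 cmax))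
    (hFmono : MonotoneOn F (Set.Icc 0 cmax))
    (hFconc : ConcaveOn ℝ (Set.Icc 0 cmax) F)
    (hF0 : F 0 = 0) (hF1 : F cmax = 1)
    (hB : 0 < B) (hV₁ : 0 < V₁) (hV₂ : 0 < V₂)
    (hle : B * (V₁ + V₂) ≤ cmax) :
    ∃! c : ℝ, c ∈ Set.Ioc 0 cmax ∧ B * (V₁ * F c + V₂) = c :=
  stmt0_general cmax B V₁ V₂ F hcmax hFcont hFconc hF0 hF1 hB hV₁ hV₂ hle
end

section
/- Let B̄, c_max, V₁, V₂ > 0, let F : ℝ → ℝ be L_F-Lipschitz with 0 ≤ F(c) ≤ 1 for all c ∈ [0, c_max], and suppose B̄·V₁·L_F < 1. If c : [0, B̄] → [0, c_max] satisfies c(B) = B·(V₁·F(c(B)) + V₂) for all B ∈ [0, B̄], then c is Lipschitz on [0, B̄] with Lipschitz constant (V₁ + V₂)/(1 − B̄·V₁·L_F). -/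
/-- Lipschitz dependence of the implicitly defined equilibrium threshold `c(B)`,
solving `c(B) = B·(V₁·F(c(B)) + V₂)`, on the bonus level `B`. -/
theorem stmt15 (Bbar cmax V₁ V₂ LF : ℝ) (F : ℝ → ℝ) (c : ℝ → ℝ)
    (hBbar : 0 < Bbar) (hcmax : 0 < cmax) (hV₁ : 0 < V₁) (hV₂ : 0 < V₂)
    (hFLip : ∀ x y : ℝ, |F x - F y| ≤ LF * |x - y|)
    (hFbd : ∀ x ∈ Set.Icc (0:ℝ) cmax, 0 ≤ F x ∧ F x ≤ 1)
    (hsmall : Bbar * V₁ * LF < 1)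
    (hrange : ∀ B ∈ Set.Icc (0:ℝ) Bbar, c B ∈ Set.Icc (0:ℝ) cmax)
    (heq : ∀ B ∈ Set.Icc (0:ℝ) Bbar, c B = B * (V₁ * F (c B) + V₂)) :
    ∀ B₁ ∈ Set.Icc (0:ℝ) Bbar, ∀ B₂ ∈ Set.Icc (0:ℝ) Bbar,
      |c B₁ - c B₂| ≤ (V₁ + V₂) / (1 - Bbar * V₁ * LF) * |B₁ - B₂| := by
  intro B₁ hB₁ B₂ hB₂
  have hLF : 0 ≤ LF := by
    have h := hFLip 0 1
    have h0 : (0:ℝ) ≤ |F 0 - F 1| := abs_nonneg _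
    simpa using (le_trans h0 h).trans_eq (by norm_num)
  have hden : 0 < 1 - Bbar * V₁ * LF := by linarith
  have hF₁ := hFbd _ (hrange B₁ hB₁)
  have key : c B₁ - c B₂ = (B₁ - B₂) * (V₁ * F (c B₁) + V₂)
      + B₂ * V₁ * (F (c B₁) - F (c B₂)) := by
    linear_combination (heq B₁ hB₁) - (heq B₂ hB₂)
  have hbd1 : |V₁ * F (c B₁) + V₂| ≤ V₁ + V₂ := by
    rw [abs_of_nonneg (by nlinarith [hF₁.1])]
    nlinarith [hF₁.2]
  have hB₂bd : |B₂| ≤ Bbar := by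
    rw [abs_of_nonneg hB₂.1]; exact hB₂.2
  have hFd : |F (c B₁) - F (c B₂)| ≤ LF * |c B₁ - c B₂| := hFLip _ _
  have step : |c B₁ - c B₂| ≤ (V₁ + V₂) * |B₁ - B₂|
      + Bbar * V₁ * LF * |c B₁ - c B₂| := by
    calc |c B₁ - c B₂| ≤ |(B₁ - B₂) * (V₁ * F (c B₁) + V₂)|
          + |B₂ * V₁ * (F (c B₁) - F (c B₂))| := by
          rw [key]; exact abs_add_le _ _
      _ ≤ (V₁ + V₂) * |B₁ - B₂| + Bbar * V₁ * LF * |c B₁ - c B₂| := by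
          rw [abs_mul, abs_mul, abs_mul]
          have h1 : |B₁ - B₂| * |V₁ * F (c B₁) + V₂| ≤ |B₁ - B₂| * (V₁ + V₂) :=
            mul_le_mul_of_nonneg_left hbd1 (abs_nonneg _)
          have h2 : |B₂| * |V₁| * |F (c B₁) - F (c B₂)|
              ≤ Bbar * V₁ * (LF * |c B₁ - c B₂|) := by
            apply mul_le_mul
            · rw [abs_of_nonneg hV₁.le]
              exact mul_le_mul_of_nonneg_right hB₂bd hV₁.le
            · exact hFd
            · exact abs_nonneg _
            · positivity
          nlinarith
  rw [div_mul_eq_mul_div, le_div_iff₀ hden]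
  nlinarith
end

section
/- Let p₀ ∈ (1/2, 1], let q, q̃ ∈ [p₀, 1], and let m, m̃ be real numbers with |m + q − 1| ≤ 1. If |m̃ − m| ≤ δ and |q̃ − q| ≤ δ′, then |(m̃ + q̃ − 1)/(2q̃ − 1) − (m + q − 1)/(2q − 1)| ≤ 2δ′/(2p₀ − 1)² + (δ + δ′)/(2p₀ − 1). -/
theorem div_sub_div_eq_sub_div_add {α : Type*} [Field α] {a b c d : α} (hc : c ≠ 0) (hd : d ≠ 0) :
    a / c - b / d = (a - b) / c + b * (d - c) / (c * d) := by
  field_simp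
  ring

theorem abs_div_sub_div_le {α : Type*} [Field α] [LinearOrder α] [IsStrictOrderedRing α]
    {a b c d e : α} (he : 0 < e) (hc : e ≤ c) (hd : e ≤ d) :
    |a / c - b / d| ≤ |a - b| / e + |b| * |c - d| / e ^ 2 := by
  have hc₀ : 0 < c := he.trans_le hc
  have hd₀ : 0 < d := he.trans_le hd
  have hcd : e ^ 2 ≤ c * d := by rw [sq]; exact mul_le_mul hc hd he.le hc₀.le
  rw [div_sub_div_eq_sub_div_add hc₀.ne' hd₀.ne']
  calc |(a - b) / c + b * (d - c) / (c * d)|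
      ≤ |(a - b) / c| + |b * (d - c) / (c * d)| := abs_add_le _ _
    _ = |a - b| / c + |b| * |c - d| / (c * d) := by
        rw [abs_div, abs_div, abs_mul, abs_sub_comm d c, abs_of_pos hc₀,
          abs_of_pos (mul_pos hc₀ hd₀)]
    _ ≤ |a - b| / e + |b| * |c - d| / e ^ 2 := by
        gcongr

/-- Error-propagation lemma for the inversion formula `(m + q - 1)/(2q - 1)`:
errors `δ` on `m` and `δ'` on `q ≥ p₀ > 1/2` propagate to an error of at most
`2δ'/(2p₀-1)² + (δ + δ')/(2p₀-1)`. -/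
theorem stmt16 (p₀ q qt m mt δ δ' : ℝ) (hp₀ : p₀ ∈ Set.Ioc (1/2 : ℝ) 1)
    (hq : q ∈ Set.Icc p₀ 1) (hqt : qt ∈ Set.Icc p₀ 1)
    (hm : |m + q - 1| ≤ 1) (hδ : |mt - m| ≤ δ) (hδ' : |qt - q| ≤ δ') :
    |(mt + qt - 1)/(2*qt - 1) - (m + q - 1)/(2*q - 1)| ≤
      2*δ'/(2*p₀ - 1)^2 + (δ + δ')/(2*p₀ - 1) := by
  have he : 0 < 2 * p₀ - 1 := by linarith [hp₀.1]
  have hnum : |(mt + qt - 1) - (m + q - 1)| ≤ δ + δ' := by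
    calc |(mt + qt - 1) - (m + q - 1)| = |(mt - m) + (qt - q)| := by ring_nf
      _ ≤ δ + δ' := (abs_add_le _ _).trans (add_le_add hδ hδ')
  have hden : |m + q - 1| * |(2 * qt - 1) - (2 * q - 1)| ≤ 2 * δ' := by
    calc |m + q - 1| * |(2 * qt - 1) - (2 * q - 1)| = |m + q - 1| * (2 * |qt - q|) := by
          rw [show (2 * qt - 1) - (2 * q - 1) = 2 * (qt - q) by ring, abs_mul, abs_two]
      _ ≤ 1 * (2 * δ') := by gcongr
      _ = 2 * δ' := one_mul _
  calc |(mt + qt - 1)/(2*qt - 1) - (m + q - 1)/(2*q - 1)|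
      ≤ |(mt + qt - 1) - (m + q - 1)| / (2 * p₀ - 1)
        + |m + q - 1| * |(2 * qt - 1) - (2 * q - 1)| / (2 * p₀ - 1) ^ 2 :=
        abs_div_sub_div_le he (by linarith [hqt.1]) (by linarith [hq.1])
    _ ≤ (δ + δ') / (2 * p₀ - 1) + 2 * δ' / (2 * p₀ - 1) ^ 2 := by gcongr
    _ = 2*δ'/(2*p₀ - 1)^2 + (δ + δ')/(2*p₀ - 1) := add_comm _ _
end
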